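/- (Corollary) Let A = ℝ[x₁,...,x_d, h₁,...,h_m] with h_j Borel measurable on ℝᵈ, and let q₀ = 1 − (x₁²+...+x_d² + h₁²+...+h_m²) and q₁,...,qₙ ∈ A. Set P = {x ∈ ℝᵈ : qᵢ(x) ≥ 0, 0 ≤ i ≤ n}. If the quadratic module M = ΣA² + q₀ΣA² + ... + qₙΣA² has the moment property, then every f ∈ A with f > 0 on P belongs to M. -/

import Mathlib

/-!
Since `q₀ = 1 - (∑ xᵢ² + ∑ hⱼ²)` lies in `M`, every generator `g` of `A` satisfies
`1 - g² ∈ M`, and the elements `a` with `N - a² ∈ M` for some `N` form a subalgebra; hence `M`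
is archimedean: the constant `1` is an order unit for the cone `M`. If `f ∉ M`, then `-1` does
not lie in the cone `M - ℝ≥0 f`, and the Riesz extension theorem yields a linear functional
`L ≥ 0` on `M` with `L 1 = 1` and `L f ≤ 0`. By the moment property `L` is integration against
a nonzero measure carried by `P`, where `f > 0`, so `L f > 0`: a contradiction.
-/

open MeasureTheory

section QuadraticModule

variable {R : Type*} [CommSemiring R] [Algebra ℝ R] {ι : Type*} [Fintype ι]

theorem IsSumSq.algebraMap_of_nonneg {c : ℝ} (hc : 0 ≤ c) : IsSumSq (algebraMap ℝ R c) := by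
  rw [← Real.mul_self_sqrt hc, map_mul]
  exact IsSumSq.mul_self _

def quadraticModule (q : ι → R) : PointedCone ℝ R where
  carrier := {a | ∃ s₀ : R, IsSumSq s₀ ∧ ∃ s : ι → R, (∀ i, IsSumSq (s i)) ∧
    a = s₀ + ∑ i, q i * s i}
  zero_mem' := ⟨0, .zero, 0, fun _ => .zero, by simp⟩
  add_mem' := by
    rintro _ _ ⟨s₀, hs₀, s, hs, rfl⟩ ⟨t₀, ht₀, t, ht, rfl⟩
    refine ⟨s₀ + t₀, hs₀.add ht₀, s + t, fun i => (hs i).add (ht i), ?_⟩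
    simp only [Pi.add_apply, mul_add, Finset.sum_add_distrib]
    ring
  smul_mem' := by
    rintro ⟨c, hc⟩ _ ⟨s₀, hs₀, s, hs, rfl⟩
    have hc' := IsSumSq.algebraMap_of_nonneg (R := R) hc
    refine ⟨algebraMap ℝ R c * s₀, hc'.mul hs₀, fun i => algebraMap ℝ R c * s i,
      fun i => hc'.mul (hs i), ?_⟩
    simp only [Nonneg.mk_smul, Algebra.smul_def, mul_add, Finset.mul_sum, mul_left_comm]

variable {q : ι → R}

namespace quadraticModule

theorem mem_of_isSumSq {a : R} (ha : IsSumSq a) : a ∈ quadraticModule q :=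
  ⟨a, ha, 0, fun _ => .zero, by simp⟩

theorem one_mem : (1 : R) ∈ quadraticModule q := mem_of_isSumSq .one

theorem generator_mem (i : ι) : q i ∈ quadraticModule q := by
  classical
  refine ⟨0, .zero, Pi.single i 1, fun j => ?_, by simp [Pi.single_apply]⟩
  by_cases h : j = i <;> simp [h, IsSumSq.one]

theorem mul_mem_of_isSumSq {s a : R} (hs : IsSumSq s) (ha : a ∈ quadraticModule q) :
    s * a ∈ quadraticModule q := by
  obtain ⟨s₀, hs₀, t, ht, rfl⟩ := ha
  refine ⟨s * s₀, hs.mul hs₀, fun i => s * t i, fun i => hs.mul (ht i), ?_⟩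
  simp only [mul_add, Finset.mul_sum, mul_left_comm]

end quadraticModule

end QuadraticModule

section Archimedean

variable {R : Type*} [CommRing R] [Algebra ℝ R] {ι : Type*} [Fintype ι] {q : ι → R}

-- Bounding `a²` rather than `±a` makes closure under products immediate.
def boundedElements (q : ι → R) : Subalgebra ℝ R where
  carrier := {a | ∃ N : ℝ, 0 ≤ N ∧ algebraMap ℝ R N - a * a ∈ quadraticModule q}
  algebraMap_mem' c := ⟨c ^ 2, sq_nonneg c, by rw [sq, map_mul, sub_self]; exact zero_mem _⟩
  add_mem' := by
    rintro a b ⟨N₁, hN₁, ha⟩ ⟨N₂, hN₂, hb⟩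
    refine ⟨2 * N₁ + 2 * N₂, by positivity, ?_⟩
    have h : algebraMap ℝ R (2 * N₁ + 2 * N₂) - (a + b) * (a + b) =
        (2 : ℝ) • (algebraMap ℝ R N₁ - a * a) + (2 : ℝ) • (algebraMap ℝ R N₂ - b * b) +
          (a - b) * (a - b) := by
      simp only [Algebra.smul_def, map_add, map_mul, map_ofNat]
      ring
    rw [h]
    exact add_mem (add_mem ((quadraticModule q).smul_mem zero_le_two ha)
      ((quadraticModule q).smul_mem zero_le_two hb))
      (quadraticModule.mem_of_isSumSq (.mul_self _))
  mul_mem' := by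
    rintro a b ⟨N₁, hN₁, ha⟩ ⟨N₂, hN₂, hb⟩
    refine ⟨N₁ * N₂, by positivity, ?_⟩
    have h : algebraMap ℝ R (N₁ * N₂) - (a * b) * (a * b) =
        N₂ • (algebraMap ℝ R N₁ - a * a) + (a * a) * (algebraMap ℝ R N₂ - b * b) := by
      simp only [Algebra.smul_def, map_mul]
      ring
    rw [h]
    exact add_mem ((quadraticModule q).smul_mem hN₂ ha)
      (quadraticModule.mul_mem_of_isSumSq (.mul_self a) hb)

theorem exists_algebraMap_add_mem_of_mem_boundedElements {a : R} (ha : a ∈ boundedElements q) :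
    ∃ c : ℝ, algebraMap ℝ R c + a ∈ quadraticModule q := by
  obtain ⟨N, -, ha⟩ := ha
  refine ⟨(N + 1) / 2, ?_⟩
  have h : (2 : ℝ) • (algebraMap ℝ R ((N + 1) / 2) + a) =
      (1 + a) * (1 + a) + (algebraMap ℝ R N - a * a) := by
    rw [smul_add, Algebra.smul_def, ← map_mul, mul_div_cancel₀ _ two_ne_zero, map_add, map_one,
      two_smul]
    ring
  rw [← (quadraticModule q).smul_mem_iff two_pos, h]
  exact add_mem (quadraticModule.mem_of_isSumSq (.mul_self _)) ha

theorem boundedElements_eq_top_of_adjoin_eq_top {S : Set R} (hS : Algebra.adjoin ℝ S = ⊤)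
    (hS_mem : ∀ g ∈ S, 1 - g * g ∈ quadraticModule q) : boundedElements q = ⊤ :=
  top_le_iff.mp <| hS ▸ Algebra.adjoin_le fun g hg =>
    ⟨1, zero_le_one, by simpa using hS_mem g hg⟩

theorem one_sub_mul_self_mem_quadraticModule {κ : Type*} [Fintype κ]
    {g : κ → R} {i : ι} (hi : q i = 1 - ∑ k, g k * g k) (k : κ) :
    1 - g k * g k ∈ quadraticModule q := by
  classical
  have h : 1 - g k * g k = q i + ∑ l ∈ Finset.univ.erase k, g l * g l := by
    rw [hi, ← Finset.sum_erase_add _ _ (Finset.mem_univ k)]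
    ring
  rw [h]
  exact add_mem (quadraticModule.generator_mem i)
    (quadraticModule.mem_of_isSumSq (IsSumSq.sum_mul_self _ _))

end Archimedean

namespace PointedCone

variable {E : Type*} [AddCommGroup E] [Module ℝ E]

theorem exists_linearMap_nonneg_of_neg_notMem (C : PointedCone ℝ E) {u : E}
    (hu : ∀ y, ∃ c : ℝ, c • u + y ∈ C) (hneg : -u ∉ C) :
    ∃ L : E →ₗ[ℝ] ℝ, (∀ x ∈ C, 0 ≤ L x) ∧ L u = 1 := by
  have hu0 : u ≠ 0 := by
    rintro rfl
    exact hneg (by simp)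
  let L₀ : E →ₗ.[ℝ] ℝ := LinearPMap.mkSpanSingleton u 1 hu0
  have hL₀_nonneg : ∀ x : L₀.domain, (x : E) ∈ C → 0 ≤ L₀ x := by
    rintro ⟨x, hx⟩ hxC
    obtain ⟨c, rfl⟩ := Submodule.mem_span_singleton.mp hx
    rw [LinearPMap.mkSpanSingleton'_apply, RingHom.id_apply, smul_eq_mul, mul_one]
    by_contra! hc
    have := C.smul_mem (inv_nonneg.mpr (neg_nonneg.mpr hc.le)) hxC
    rw [smul_smul, inv_mul_eq_div, div_neg, div_self hc.ne, neg_smul, one_smul] at this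
    exact hneg this
  have hL₀_dense : ∀ y, ∃ x : L₀.domain, (x : E) + y ∈ C := fun y => by
    obtain ⟨c, hc⟩ := hu y
    exact ⟨⟨c • u, Submodule.smul_mem _ c (Submodule.mem_span_singleton_self u)⟩, hc⟩
  obtain ⟨L, hLL₀, hL⟩ := riesz_extension C L₀ hL₀_nonneg hL₀_dense
  exact ⟨L, hL, (hLL₀ ⟨u, Submodule.mem_span_singleton_self u⟩).trans
    (LinearPMap.mkSpanSingleton_apply ℝ ℝ hu0 1)⟩

theorem neg_notMem_sup_hull_neg {M : PointedCone ℝ E} {u f : E} (hu : u ∈ M)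
    (hunit : ∀ y, ∃ c : ℝ, c • u + y ∈ M) (hf : f ∉ M) : -u ∉ M ⊔ hull ℝ {-f} := by
  intro hneg
  obtain ⟨m, hm, _, hz, hmz⟩ := Submodule.mem_sup.mp hneg
  obtain ⟨⟨t, ht⟩, rfl⟩ := Submodule.mem_span_singleton.mp hz
  rw [Nonneg.mk_smul] at hmz
  rcases ht.eq_or_lt with ht | ht
  · rw [← ht, zero_smul, add_zero] at hmz
    subst hmz
    have hline : ∀ c : ℝ, c • u ∈ M := fun c => by
      rcases le_or_gt c 0 with hc | hc
      · simpa only [neg_smul, smul_neg, neg_neg] using M.smul_mem (neg_nonneg.mpr hc) hm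
      · exact M.smul_mem hc.le hu
    obtain ⟨c, hc⟩ := hunit f
    exact hf (by simpa using add_mem hc (hline (-c)))
  · have hfm : f = t⁻¹ • (m + u) := by
      rw [eq_inv_smul_iff₀ ht.ne', ← sub_eq_zero, ← neg_add_eq_zero.mpr hmz]
      simp only [smul_neg]
      abel
    exact hf (hfm ▸ M.smul_mem (inv_nonneg.mpr ht.le) (add_mem hm hu))

theorem exists_linearMap_nonneg_of_notMem {M : PointedCone ℝ E} {u f : E} (hu : u ∈ M)
    (hunit : ∀ y, ∃ c : ℝ, c • u + y ∈ M) (hf : f ∉ M) :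
    ∃ L : E →ₗ[ℝ] ℝ, (∀ x ∈ M, 0 ≤ L x) ∧ L u = 1 ∧ L f ≤ 0 := by
  obtain ⟨L, hL, hLu⟩ := exists_linearMap_nonneg_of_neg_notMem (M ⊔ hull ℝ {-f})
    (fun y => (hunit y).imp fun _ => Submodule.mem_sup_left) (neg_notMem_sup_hull_neg hu hunit hf)
  refine ⟨L, fun x hx => hL x (Submodule.mem_sup_left hx), hLu, ?_⟩
  simpa using hL (-f) (Submodule.mem_sup_right (subset_hull rfl))

end PointedCone

theorem integral_pos_of_ae_pos {α : Type*} [MeasurableSpace α] {μ : Measure α} {f : α → ℝ}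
    (hμ : μ ≠ 0) (hf : ∀ᵐ x ∂μ, 0 < f x) (hfi : Integrable f μ) : 0 < ∫ x, f x ∂μ := by
  have hsupp : Function.support f =ᵐ[μ] (Set.univ : Set α) :=
    ae_eq_univ.mpr (ae_iff.mp (hf.mono fun _ hx => hx.ne'))
  rw [integral_pos_iff_support_of_nonneg_ae (hf.mono fun _ hx => hx.le) hfi, measure_congr hsupp]
  exact Measure.measure_univ_pos.mpr hμ

theorem measurable_striktpositivstellensatz_corollary_general {d m n : ℕ}
    (h : Fin m → (Fin d → ℝ) → ℝ)
    (A : Subalgebra ℝ ((Fin d → ℝ) → ℝ))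
    (hA : A = Algebra.adjoin ℝ
      ((Set.range fun i : Fin d => fun x : Fin d → ℝ => x i) ∪ Set.range h))
    (q : Fin (n + 1) → A)
    (hq0 : ((q 0 : A) : (Fin d → ℝ) → ℝ) =
      fun x : Fin d → ℝ => 1 - (∑ i, (x i) ^ 2 + ∑ j, (h j x) ^ 2))
    -- `M = ΣA² + q₀ΣA² + ⋯ + qₙΣA²`
    (M : Set A)
    (hM : M = {a : A | ∃ s₀ : A, IsSumSq s₀ ∧ ∃ s : Fin (n + 1) → A,
        (∀ i, IsSumSq (s i)) ∧ a = s₀ + ∑ i, q i * s i})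
    -- `M` has the moment property:
    (hmom : ∀ L : A →ₗ[ℝ] ℝ, (∀ g ∈ M, 0 ≤ L g) →
      ∃ μ : Measure (Fin d → ℝ),
        μ {x : Fin d → ℝ | ∀ i, 0 ≤ ((q i : A) : (Fin d → ℝ) → ℝ) x}ᶜ = 0 ∧
        ∀ g : A, Integrable (g : (Fin d → ℝ) → ℝ) μ ∧
          L g = ∫ x, (g : (Fin d → ℝ) → ℝ) x ∂μ)
    (f : A)
    (hf : ∀ x ∈ {x : Fin d → ℝ | ∀ i, 0 ≤ ((q i : A) : (Fin d → ℝ) → ℝ) x},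
        0 < (f : (Fin d → ℝ) → ℝ) x) :
    f ∈ M := by
  set S : Set ((Fin d → ℝ) → ℝ) := (Set.range fun i x => x i) ∪ Set.range h
  subst hA hM
  show f ∈ quadraticModule q
  let g : Fin d ⊕ Fin m → Algebra.adjoin ℝ S := Sum.elim
    (fun i => ⟨fun x => x i, Algebra.subset_adjoin (Or.inl ⟨i, rfl⟩)⟩)
    (fun j => ⟨h j, Algebra.subset_adjoin (Or.inr ⟨j, rfl⟩)⟩)
  have hq0g : q 0 = 1 - ∑ k, g k * g k := by
    ext x
    simp [hq0, g, Fintype.sum_sum_type, sq]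
  have hbounded : boundedElements q = ⊤ := by
    refine boundedElements_eq_top_of_adjoin_eq_top Algebra.adjoin_adjoin_coe_preimage ?_
    rintro a (⟨i, hi⟩ | ⟨j, hj⟩)
    · exact (Subtype.ext hi : g (.inl i) = a) ▸ one_sub_mul_self_mem_quadraticModule hq0g _
    · exact (Subtype.ext hj : g (.inr j) = a) ▸ one_sub_mul_self_mem_quadraticModule hq0g _
  have hunit (a : Algebra.adjoin ℝ S) :
      ∃ c : ℝ, c • (1 : Algebra.adjoin ℝ S) + a ∈ quadraticModule q := by
    simpa only [Algebra.algebraMap_eq_smul_one] using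
      exists_algebraMap_add_mem_of_mem_boundedElements (hbounded ▸ Algebra.mem_top : a ∈ _)
  by_contra hfM
  obtain ⟨L, hLM, hL1, hLf⟩ :=
    PointedCone.exists_linearMap_nonneg_of_notMem quadraticModule.one_mem hunit hfM
  obtain ⟨μ, hμP, hμL⟩ := hmom L hLM
  have hμ : μ ≠ 0 := by
    rintro rfl
    simpa [hL1] using (hμL 1).2
  have hfpos : 0 < L f := (hμL f).2 ▸
    integral_pos_of_ae_pos hμ (Filter.mem_of_superset (mem_ae_iff.mpr hμP) hf) (hμL f).1
  linarith

/-- **Corollary.** In `A = ℝ[x₁,…,x_d,h₁,…,h_m]`, with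
`q₀ = 1 - (∑ xᵢ² + ∑ hⱼ²)` and `q₁,…,qₙ ∈ A`, if the finitely generated
quadratic module `M = ΣA² + q₀ΣA² + ⋯ + qₙΣA²` has the moment property, then
every `f ∈ A` positive on `P = {x | qᵢ(x) ≥ 0, 0 ≤ i ≤ n}` lies in `M`. -/
theorem measurable_striktpositivstellensatz_corollary {d m n : ℕ}
    (h : Fin m → (Fin d → ℝ) → ℝ) (hh : ∀ j, Measurable (h j))
    (A : Subalgebra ℝ ((Fin d → ℝ) → ℝ))
    (hA : A = Algebra.adjoin ℝ
      ((Set.range fun i : Fin d => fun x : Fin d → ℝ => x i) ∪ Set.range h))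
    (q : Fin (n + 1) → A)
    (hq0 : ((q 0 : A) : (Fin d → ℝ) → ℝ) =
      fun x : Fin d → ℝ => 1 - (∑ i, (x i) ^ 2 + ∑ j, (h j x) ^ 2))
    -- `M = ΣA² + q₀ΣA² + ⋯ + qₙΣA²`
    (M : Set A)
    (hM : M = {a : A | ∃ s₀ : A, IsSumSq s₀ ∧ ∃ s : Fin (n + 1) → A,
        (∀ i, IsSumSq (s i)) ∧ a = s₀ + ∑ i, q i * s i})
    -- `M` has the moment property:
    (hmom : ∀ L : A →ₗ[ℝ] ℝ, (∀ g ∈ M, 0 ≤ L g) →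
      ∃ μ : Measure (Fin d → ℝ),
        μ {x : Fin d → ℝ | ∀ i, 0 ≤ ((q i : A) : (Fin d → ℝ) → ℝ) x}ᶜ = 0 ∧
        ∀ g : A, Integrable (g : (Fin d → ℝ) → ℝ) μ ∧
          L g = ∫ x, (g : (Fin d → ℝ) → ℝ) x ∂μ)
    (f : A)
    (hf : ∀ x ∈ {x : Fin d → ℝ | ∀ i, 0 ≤ ((q i : A) : (Fin d → ℝ) → ℝ) x},
        0 < (f : (Fin d → ℝ) → ℝ) x) :
    f ∈ M :=
  measurable_striktpositivstellensatz_corollary_general h A hA q hq0 M hM hmom f hf
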